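/- arXiv:2210.16603 — 6 statements merged into one kernel-verified Lean document; each statement's English description precedes it below -/
import Mathlib

section
/- The 3-dimensional spined cube SQ_3 is isomorphic to the Cayley graph of the cyclic group Z/8 with connection set {a, a^{-1}, a^4} where a is a generator; in particular SQ_3 is vertex-transitive. -/
/-- The "difference vector" of the neighbor rules of the spined cube, `i` being the
0-based index of the flipped bit. -/
def sqDelta (n : ℕ) (x : Fin n → ZMod 2) (i : Fin n) : Fin n → ZMod 2 :=
  fun j =>
    (if j = i then 1 else 0) +
    (if i.val + 5 ≤ n then
      (if j.val = i.val + 1 then x ⟨n - 2, by have := i.isLt; omega⟩ else 0) +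
      (if j.val = i.val + 2 then x ⟨n - 1, by have := i.isLt; omega⟩ else 0)
    else if n ≤ i.val + 2 then 0
    else (if j.val = i.val + 1 then x ⟨n - 1, by have := i.isLt; omega⟩ else 0))

/-- The `n`-dimensional spined cube `SQ_n`. -/
def spinedCube (n : ℕ) : SimpleGraph (Fin n → ZMod 2) :=
  SimpleGraph.fromRel (fun x y => ∃ i : Fin n, y = x + sqDelta n x i)

/-- The Cayley graph of an additive group `G` with connection set `S`. -/
def cayleyGraph (G : Type*) [AddGroup G] (S : Set G) : SimpleGraph G :=
  SimpleGraph.fromRel (fun g h => h - g ∈ S)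

/-!
Labelling the vertices of `SQ_3` by `ℤ/8` along the Hamiltonian cycle
`000, 001, 111, 110, 010, 011, 101, 100` turns the remaining edges into the four
antipodal pairs `{k, k + 4}`, so `SQ_3` is the circulant graph `Cay(ℤ/8, {±1, 4})`.
Cayley graphs are vertex-transitive because translations are automorphisms, and
vertex-transitivity is invariant under isomorphism.
-/

open SimpleGraph

def SimpleGraph.IsVertexTransitive {V : Type*} (G : SimpleGraph V) : Prop :=
  ∀ u v : V, ∃ e : G ≃g G, e u = v

theorem SimpleGraph.IsVertexTransitive.of_iso {V W : Type*} {G : SimpleGraph V}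
    {H : SimpleGraph W} (hH : H.IsVertexTransitive) (φ : G ≃g H) : G.IsVertexTransitive := by
  intro u v
  obtain ⟨e, he⟩ := hH (φ u) (φ v)
  exact ⟨(φ.trans e).trans φ.symm, by simp [he]⟩

section Cayley

variable {G : Type*} [AddGroup G] (S : Set G)

theorem cayleyGraph_eq_circulantGraph : cayleyGraph G S = circulantGraph S := by
  ext g h
  simp only [cayleyGraph, circulantGraph_adj, fromRel_adj]
  tauto

def circulantGraphAddRight (d : G) : circulantGraph S ≃g circulantGraph S where
  toEquiv := Equiv.addRight d
  map_rel_iff' := circulantGraph_adj_translate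

theorem circulantGraph_isVertexTransitive : (circulantGraph S).IsVertexTransitive :=
  fun u v => ⟨circulantGraphAddRight S (-u + v), by simp [circulantGraphAddRight]⟩

theorem cayleyGraph_isVertexTransitive : (cayleyGraph G S).IsVertexTransitive :=
  cayleyGraph_eq_circulantGraph S ▸ circulantGraph_isVertexTransitive S

end Cayley

def sq3Label : ZMod 8 → Fin 3 → ZMod 2 :=
  ![![0, 0, 0], ![0, 0, 1], ![1, 1, 1], ![1, 1, 0], ![0, 1, 0], ![0, 1, 1], ![1, 0, 1], ![1, 0, 0]]

theorem sq3Label_bijective : Function.Bijective sq3Label := by decide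

theorem spinedCube_three_adj_sq3Label_iff (a b : ZMod 8) :
    (spinedCube 3).Adj (sq3Label a) (sq3Label b) ↔
      (circulantGraph ({1, -1, 4} : Set (ZMod 8))).Adj a b := by
  simp only [spinedCube, fromRel_adj]
  decide +revert

noncomputable def cayleyGraphIsoSpinedCubeThree :
    cayleyGraph (ZMod 8) {1, -1, 4} ≃g spinedCube 3 where
  toEquiv := Equiv.ofBijective sq3Label sq3Label_bijective
  map_rel_iff' {a b} := by
    rw [cayleyGraph_eq_circulantGraph]
    exact spinedCube_three_adj_sq3Label_iff a b

/-- `SQ_3` is isomorphic to `Cay(ℤ/8, {1, -1, 4})`; in particular it is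
vertex-transitive. -/
theorem sq3_iso_cayley_and_vertexTransitive :
    Nonempty (spinedCube 3 ≃g cayleyGraph (ZMod 8) {1, -1, 4}) ∧
    ∀ u v : Fin 3 → ZMod 2, ∃ e : spinedCube 3 ≃g spinedCube 3, e u = v :=
  ⟨⟨cayleyGraphIsoSpinedCubeThree.symm⟩,
    (cayleyGraph_isVertexTransitive _).of_iso cayleyGraphIsoSpinedCubeThree.symm⟩
end

section
/- The 4-dimensional spined cube SQ_4 is isomorphic to the bi-Cayley graph of H = (Z/2)^3 = ⟨a_1⟩ × ⟨a_2⟩ × ⟨a_3⟩ with respect to T_11 = {a_1, a_2, a_3}, T_22 = {a_1a_2, a_2a_3, a_3}, T_12 = {1}. -/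
/-- The bi-Cayley graph of an additive group `H` with respect to `T₁₁, T₂₂, T₁₂`:
vertices are `H × {0,1}` (the two copies of `H`), with `(h,i)` adjacent to `(g,j)`
iff `g - h` lies in `T i j` (symmetrized). -/
def biCayleyGraph (H : Type*) [AddGroup H] (T11 T22 T12 : Set H) :
    SimpleGraph (H × Fin 2) :=
  SimpleGraph.fromRel (fun p q =>
    (p.2 = 0 ∧ q.2 = 0 ∧ q.1 - p.1 ∈ T11) ∨
    (p.2 = 1 ∧ q.2 = 1 ∧ q.1 - p.1 ∈ T22) ∨
    (p.2 = 0 ∧ q.2 = 1 ∧ q.1 - p.1 ∈ T12))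

/-!
Both graphs are "vertex-dependent Cayley graphs": `x` is joined to `x + δ x i` for each index
`i`, and an additive equivalence that carries the steps `δ` onto the steps `δ'` (up to a
relabelling of the indices) is a graph isomorphism. Splitting `x ∈ (ℤ/2)⁴` as `(h, x₄)`, the
first three rules of `SQ_4` add `a₁ + x₄a₂`, `a₂ + x₄a₃`, `a₃` to `h` and keep `x₄`, i.e. they are
the steps by `T₁₁` in the copy `x₄ = 0` and by `T₂₂` in the copy `x₄ = 1`, while the fourth rule
flips `x₄` and keeps `h`, which is the step by `T₁₂ = {0}` between the copies.
-/

open SimpleGraph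

def shiftGraph {G ι : Type*} [Add G] (δ : G → ι → G) : SimpleGraph G :=
  fromRel fun x y => ∃ i, y = x + δ x i

theorem spinedCube_eq_shiftGraph (n : ℕ) : spinedCube n = shiftGraph (sqDelta n) := rfl

def shiftGraph.isoOfAddEquiv {G G' ι κ : Type*} [Add G] [Add G'] {δ : G → ι → G}
    {δ' : G' → κ → G'} (e : G ≃+ G') (σ : ι ≃ κ) (he : ∀ x i, e (δ x i) = δ' (e x) (σ i)) :
    shiftGraph δ ≃g shiftGraph δ' where
  toEquiv := e.toEquiv
  map_rel_iff' := by
    simp [shiftGraph, σ.surjective.exists, ← he, ← map_add, e.injective.eq_iff]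

def biCayleyStep {H ι : Type*} [Zero H] (s t : ι → H) (p : H × Fin 2) : Option ι → H × Fin 2
  | none => (0, 1)
  | some i => (![s, t] p.2 i, 0)

theorem biCayleyGraph_range_eq_shiftGraph {H ι : Type*} [AddCommGroup H] (s t : ι → H) :
    biCayleyGraph H (Set.range s) (Set.range t) {0} = shiftGraph (biCayleyStep s t) := by
  ext ⟨h, c⟩ ⟨g, d⟩
  simp only [biCayleyGraph, shiftGraph, fromRel_adj]
  refine and_congr_right fun _ => ?_
  fin_cases c <;> fin_cases d <;>
    simp [biCayleyStep, Option.exists, sub_eq_zero, eq_sub_iff_add_eq', eq_comm (b := _ + s _),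
      eq_comm (b := _ + t _), eq_comm (a := h) (b := g)]

theorem range_vecCons_three {α : Type*} (a b c : α) : Set.range ![a, b, c] = {a, b, c} := by
  rw [Matrix.range_cons, Matrix.range_cons, Matrix.range_cons_empty, Set.singleton_union,
    Set.singleton_union]

def Fin.initLastAddEquiv (n : ℕ) (M : Type*) [Add M] : (Fin (n + 1) → M) ≃+ (Fin n → M) × M where
  toFun x := (Fin.init x, x (Fin.last n))
  invFun p := Fin.snoc p.1 p.2
  left_inv := Fin.snoc_init_self
  right_inv p := by simp
  map_add' _ _ := rfl

-- `ZMod 2` is `Fin 2` by definition.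
def sq4Split : (Fin 4 → ZMod 2) ≃+ (Fin 3 → ZMod 2) × Fin 2 :=
  Fin.initLastAddEquiv 3 (ZMod 2)

theorem sq4Split_sqDelta (x : Fin 4 → ZMod 2) (i : Fin 4) :
    sq4Split (sqDelta 4 x i) =
      biCayleyStep ![Pi.single 0 1, Pi.single 1 1, Pi.single 2 1]
        ![Pi.single 0 1 + Pi.single 1 1, Pi.single 1 1 + Pi.single 2 1, Pi.single 2 1]
        (sq4Split x) (finSuccEquivLast i) := by
  revert x i
  decide

/-- `SQ_4` is isomorphic to the bi-Cayley graph of `H = (ℤ/2)³` with respect to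
`T₁₁ = {a₁, a₂, a₃}`, `T₂₂ = {a₁a₂, a₂a₃, a₃}`, `T₁₂ = {1}`, where the `aᵢ` are
the standard basis vectors. -/
theorem sq4_iso_biCayley :
    Nonempty (spinedCube 4 ≃g biCayleyGraph (Fin 3 → ZMod 2)
      {Pi.single 0 1, Pi.single 1 1, Pi.single 2 1}
      {Pi.single 0 1 + Pi.single 1 1, Pi.single 1 1 + Pi.single 2 1, Pi.single 2 1}
      {0}) := by
  rw [spinedCube_eq_shiftGraph, ← range_vecCons_three, ← range_vecCons_three,
    biCayleyGraph_range_eq_shiftGraph]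
  exact ⟨shiftGraph.isoOfAddEquiv sq4Split finSuccEquivLast sq4Split_sqDelta⟩
end

section
/- The 5-dimensional spined cube SQ_5 is not vertex-transitive. -/
/-! An automorphism preserves the number of endpoints of walks of length two from a vertex;
in `SQ_5` there are 15 of them from `0` but 16 from `Pi.single 4 1`. -/

open Finset

instance (n : ℕ) : DecidableRel (spinedCube n).Adj :=
  inferInstanceAs <| DecidableRel <| SimpleGraph.Adj <|
    .fromRel fun x y : Fin n → ZMod 2 => ∃ i, y = x + sqDelta n x i

namespace SimpleGraph

variable {V W : Type*} [Fintype V] [Fintype W] {G : SimpleGraph V} {G' : SimpleGraph W}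
  [DecidableRel G.Adj] [DecidableRel G'.Adj]

variable (G) in
def twoStepFinset (v : V) : Finset V :=
  {w | ∃ a, G.Adj v a ∧ G.Adj a w}

theorem Iso.card_twoStepFinset (e : G ≃g G') (v : V) :
    #(G'.twoStepFinset (e v)) = #(G.twoStepFinset v) :=
  (card_equiv e.toEquiv fun w => by
    simp only [twoStepFinset, mem_filter, mem_univ, true_and]
    exact e.toEquiv.exists_congr fun a => by simp [e.map_adj_iff]).symm

end SimpleGraph

/-- The 5-dimensional spined cube `SQ_5` is not vertex-transitive. -/
theorem sq5_not_vertexTransitive :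
    ¬ ∀ u v : Fin 5 → ZMod 2, ∃ e : spinedCube 5 ≃g spinedCube 5, e u = v := by
  intro h
  obtain ⟨e, he⟩ := h 0 (Pi.single 4 1)
  have h₀ : #((spinedCube 5).twoStepFinset 0) = 15 := by decide
  have h₄ : #((spinedCube 5).twoStepFinset (Pi.single 4 1)) = 16 := by decide
  have := he ▸ e.card_twoStepFinset 0
  omega
end

section
/- For n ≥ 6, the n-dimensional spined cube SQ_n is isomorphic to the 4-Cayley graph Γ_n of H = (Z/2)^{n-2}: explicitly, the map φ sending x_1⋯x_{n-2}00 ↦ (x,1), x_1⋯x_{n-2}01 ↦ (x,2), x_1⋯x_{n-2}11 ↦ (x,3), x_1⋯x_{n-2}10 ↦ (x,4), where x = (x_1,…,x_{n-2}) ∈ (Z/2)^{n-2}, is a graph isomorphism from SQ_n to Γ_n. -/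
/-- The 4-Cayley graph `Γ` of `H = (ℤ/2)^m` (with `m = n - 2`): vertices are the
four copies `H × {0,1,2,3}` of `H`, with `(h,i)` adjacent to `(g,j)` iff
`g - h ∈ T i j`, for the connection sets of Definition 3.2 of the paper
(the paper's labels `1,2,3,4` correspond to `0,1,2,3` here, and `aₖ` is the
`k`-th standard basis vector, 0-indexed). -/
def gammaGraph (m : ℕ) (hm : 4 ≤ m) : SimpleGraph ((Fin m → ZMod 2) × Fin 4) :=
  SimpleGraph.fromRel (fun p q =>
    (p.2 = 0 ∧ q.2 = 0 ∧ ∃ i : Fin m, q.1 - p.1 = Pi.single i 1) ∨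
    (p.2 = 1 ∧ q.2 = 1 ∧
      ((∃ i : Fin m, ∃ h : i.val + 3 ≤ m,
          q.1 - p.1 = Pi.single i 1 + Pi.single (⟨i.val + 2, by omega⟩ : Fin m) 1) ∨
        q.1 - p.1 = Pi.single (⟨m - 2, by omega⟩ : Fin m) 1 +
          Pi.single (⟨m - 1, by omega⟩ : Fin m) 1)) ∨
    (p.2 = 2 ∧ q.2 = 2 ∧
      ((∃ i : Fin m, ∃ h : i.val + 3 ≤ m,
          q.1 - p.1 = Pi.single i 1 + Pi.single (⟨i.val + 1, by omega⟩ : Fin m) 1 +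
            Pi.single (⟨i.val + 2, by omega⟩ : Fin m) 1) ∨
        q.1 - p.1 = Pi.single (⟨m - 2, by omega⟩ : Fin m) 1 +
          Pi.single (⟨m - 1, by omega⟩ : Fin m) 1)) ∨
    (p.2 = 3 ∧ q.2 = 3 ∧
      ((∃ i : Fin m, ∃ h : i.val + 3 ≤ m,
          q.1 - p.1 = Pi.single i 1 + Pi.single (⟨i.val + 1, by omega⟩ : Fin m) 1) ∨
        q.1 - p.1 = Pi.single (⟨m - 2, by omega⟩ : Fin m) 1 ∨
        q.1 - p.1 = Pi.single (⟨m - 1, by omega⟩ : Fin m) 1)) ∨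
    (p.2 = 0 ∧ q.2 = 1 ∧ q.1 = p.1) ∨
    (p.2 = 0 ∧ q.2 = 3 ∧ q.1 = p.1) ∨
    (p.2 = 2 ∧ q.2 = 3 ∧ q.1 = p.1) ∨
    (p.2 = 1 ∧ q.2 = 2 ∧
      (q.1 = p.1 ∨ q.1 - p.1 = Pi.single (⟨m - 1, by omega⟩ : Fin m) 1)))

/-!
Split a vertex of `SQ_{m+2}` as `x = (h, s)` with `s` its last two bits. The difference vector of
every spined-cube move depends only on `s` (indices from `0`): for `i + 3 ≤ m`, move `i` translates
`h` by `a_i + s₀ a_{i+1} + s₁ a_{i+2}`; move `m - 2` translates it by `a_{m-2} + s₁ a_{m-1}`; move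
`m - 1` translates it by `a_{m-1}` and adds `s₁` to `s₀`; the last two moves flip one bit of `s`.
Labelling `s = 00, 01, 11, 10` by `0, 1, 2, 3`, these are exactly the translations by the
connection sets of `Γ`, so `x ↦ (h, label s)` is an isomorphism.
-/

theorem Fin.append_add {α : Type*} [Add α] {m n : ℕ} (a b : Fin m → α) (c d : Fin n → α) :
    Fin.append (a + b) (c + d) = Fin.append a c + Fin.append b d := by
  ext i
  refine Fin.addCases (fun j => ?_) (fun j => ?_) i <;> simp

@[simp]
theorem Fin.append_apply_mk_self {α : Type*} {m : ℕ} (u : Fin m → α) (v : Fin 2 → α)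
    (h : m < m + 2) : Fin.append u v ⟨m, h⟩ = v 0 :=
  Fin.append_right u v 0

@[simp]
theorem Fin.append_apply_mk_self_add_one {α : Type*} {m : ℕ} (u : Fin m → α) (v : Fin 2 → α)
    (h : m + 1 < m + 2) : Fin.append u v ⟨m + 1, h⟩ = v 1 :=
  Fin.append_right u v 1

namespace SpinedCube

theorem self_ne_add_sqDelta {n : ℕ} (x : Fin n → ZMod 2) (i : Fin n) : x ≠ x + sqDelta n x i :=
  fun hx => by simpa [sqDelta] using congrFun hx i

section Moves

variable {m : ℕ} (h : Fin m → ZMod 2) (s : Fin 2 → ZMod 2)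

theorem sqDelta_castAdd_of_add_three_le (k : Fin m) (hk : k.val + 3 ≤ m) :
    sqDelta (m + 2) (Fin.append h s) (Fin.castAdd 2 k) =
      Fin.append (Pi.single k 1 + Pi.single ⟨k + 1, by omega⟩ (s 0) +
        Pi.single ⟨k + 2, by omega⟩ (s 1)) 0 := by
  ext j
  refine Fin.addCases (fun j => ?_) (fun j => ?_) j <;>
    simp [sqDelta, Pi.single_apply, Fin.ext_iff, hk] <;> split_ifs <;> first | omega | simp

theorem sqDelta_castAdd_sub_two (hm : 2 ≤ m) :
    sqDelta (m + 2) (Fin.append h s) (Fin.castAdd 2 ⟨m - 2, by omega⟩) =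
      Fin.append (Pi.single ⟨m - 2, by omega⟩ 1 + Pi.single ⟨m - 1, by omega⟩ (s 1)) 0 := by
  ext j
  refine Fin.addCases (fun j => ?_) (fun j => ?_) j <;>
    simp [sqDelta, Pi.single_apply, Fin.ext_iff] <;> split_ifs <;> first | omega | simp

theorem sqDelta_castAdd_sub_one (hm : 1 ≤ m) :
    sqDelta (m + 2) (Fin.append h s) (Fin.castAdd 2 ⟨m - 1, by omega⟩) =
      Fin.append (Pi.single ⟨m - 1, by omega⟩ 1) (Pi.single 0 (s 1)) := by
  ext j
  refine Fin.addCases (fun j => ?_) (fun j => ?_) j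
  · simp [sqDelta, Pi.single_apply, Fin.ext_iff]
    split_ifs <;> first | omega | simp
  · fin_cases j <;> simp [sqDelta, Fin.ext_iff] <;> split_ifs <;> first | omega | simp

theorem sqDelta_natAdd (j : Fin 2) :
    sqDelta (m + 2) (Fin.append h s) (Fin.natAdd m j) = Fin.append 0 (Pi.single j 1) := by
  ext i
  refine Fin.addCases (fun i => ?_) (fun i => ?_) i <;>
    simp [sqDelta, Pi.single_apply, Fin.ext_iff] <;> split_ifs <;> first | omega | simp

theorem sqDelta_castAdd_append_zero (k : Fin m) :
    sqDelta (m + 2) (Fin.append h 0) (Fin.castAdd 2 k) = Fin.append (Pi.single k 1) 0 := by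
  ext j
  refine Fin.addCases (fun j => ?_) (fun j => ?_) j
  · simp [sqDelta, Pi.single_apply, Fin.ext_iff]
  · simp [sqDelta, Fin.ext_iff]
    omega

end Moves

def spineLabel : (Fin 2 → ZMod 2) ≃ Fin 4 where
  toFun s := if s 0 = 0 then (if s 1 = 0 then 0 else 1) else (if s 1 = 0 then 3 else 2)
  invFun := ![![0, 0], ![0, 1], ![1, 1], ![1, 0]]
  left_inv := by decide
  right_inv := by decide

theorem spineLabel_symm_zero : spineLabel.symm 0 = 0 := by decide

theorem spineLabel_symm_add_single (c : Fin 4) (j : Fin 2) :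
    spineLabel (spineLabel.symm c + Pi.single j 1) = ![![3, 2, 1, 0], ![1, 0, 3, 2]] j c := by
  revert c j
  decide

theorem spineLabel_symm_add_single_zero_apply_one (c : Fin 4) :
    spineLabel (spineLabel.symm c + Pi.single 0 (spineLabel.symm c 1)) = ![0, 2, 1, 3] c := by
  revert c
  decide

def spineEquiv (m : ℕ) : (Fin (m + 2) → ZMod 2) ≃ (Fin m → ZMod 2) × Fin 4 :=
  (Fin.appendEquiv m 2).symm.trans ((Equiv.refl _).prodCongr spineLabel)

@[simp]
theorem spineEquiv_append (m : ℕ) (h : Fin m → ZMod 2) (s : Fin 2 → ZMod 2) :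
    spineEquiv m (Fin.append h s) = (h, spineLabel s) := by
  simp [spineEquiv]

theorem spineEquiv_symm_apply (m : ℕ) (p : (Fin m → ZMod 2) × Fin 4) :
    (spineEquiv m).symm p = Fin.append p.1 (spineLabel.symm p.2) :=
  rfl

theorem gammaGraph_adj_spineEquiv_add_sqDelta {m : ℕ} (hm : 4 ≤ m) (x : Fin (m + 2) → ZMod 2)
    (i : Fin (m + 2)) :
    (gammaGraph m hm).Adj (spineEquiv m x) (spineEquiv m (x + sqDelta (m + 2) x i)) := by
  refine (SimpleGraph.fromRel_adj _ _ _).2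
    ⟨(spineEquiv m).injective.ne (self_ne_add_sqDelta x i), ?_⟩
  obtain ⟨⟨h, c⟩, rfl⟩ := (spineEquiv m).symm.surjective x
  rw [spineEquiv_symm_apply]
  induction i using Fin.addCases with
  | left k =>
    obtain hk | hk | hk : k.val + 3 ≤ m ∨ k.val + 2 = m ∨ k.val + 1 = m := by omega
    · rw [sqDelta_castAdd_of_add_three_le _ _ _ hk, ← Fin.append_add, spineEquiv_append,
        spineEquiv_append, add_zero]
      fin_cases c <;> simp [spineLabel, ZModModule.neg_eq_self]
      all_goals aesop
    · rw [show k = ⟨m - 2, by omega⟩ from Fin.ext (by simp; omega),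
        sqDelta_castAdd_sub_two _ _ (by omega), ← Fin.append_add, spineEquiv_append,
        spineEquiv_append, add_zero]
      fin_cases c <;> simp [spineLabel, ZModModule.neg_eq_self]
      all_goals aesop
    · rw [show k = ⟨m - 1, by omega⟩ from Fin.ext (by simp; omega),
        sqDelta_castAdd_sub_one _ _ (by omega), ← Fin.append_add, spineEquiv_append,
        spineEquiv_append, spineLabel_symm_add_single_zero_apply_one]
      fin_cases c <;> simp [ZModModule.neg_eq_self]
      all_goals aesop
  | right j =>
    rw [sqDelta_natAdd, ← Fin.append_add, spineEquiv_append, spineEquiv_append, add_zero,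
      spineLabel_symm_add_single]
    fin_cases c <;> fin_cases j <;> simp

theorem spinedCube_adj_of_gammaGraph_adj {m : ℕ} (hm : 4 ≤ m) {x y : Fin (m + 2) → ZMod 2}
    (hadj : (gammaGraph m hm).Adj (spineEquiv m x) (spineEquiv m y)) :
    (spinedCube (m + 2)).Adj x y := by
  refine (SimpleGraph.fromRel_adj _ _ _).2 ⟨fun hxy => hadj.ne (congrArg _ hxy), ?_⟩
  obtain ⟨-, hr⟩ := (SimpleGraph.fromRel_adj _ _ _).1 hadj
  clear hadj
  obtain ⟨⟨h, c⟩, rfl⟩ := (spineEquiv m).symm.surjective x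
  obtain ⟨⟨g, d⟩, rfl⟩ := (spineEquiv m).symm.surjective y
  simp only [Equiv.apply_symm_apply] at hr
  simp only [spineEquiv_symm_apply]
  refine hr.imp ?_ ?_ <;>
  rintro (⟨rfl, rfl, k, hv⟩ | ⟨rfl, rfl, ⟨k, hk, hv⟩ | hv⟩ | ⟨rfl, rfl, ⟨k, hk, hv⟩ | hv⟩ |
      ⟨rfl, rfl, ⟨k, hk, hv⟩ | hv | hv⟩ | ⟨rfl, rfl, rfl⟩ | ⟨rfl, rfl, rfl⟩ | ⟨rfl, rfl, rfl⟩ |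
      ⟨rfl, rfl, rfl | hv⟩) <;>
  (try obtain rfl := eq_add_of_sub_eq' hv)
  -- Each clause of `Γ` is realised by a move `castAdd k`, `castAdd (m - 2)`, `castAdd (m - 1)`,
  -- `natAdd 0` or `natAdd 1`; try them in turn.
  all_goals first
    | (refine ⟨Fin.castAdd 2 k, ?_⟩
       rw [spineLabel_symm_zero, sqDelta_castAdd_append_zero, ← Fin.append_add]
       simp)
    | (refine ⟨Fin.castAdd 2 k, ?_⟩
       rw [sqDelta_castAdd_of_add_three_le _ _ _ hk, ← Fin.append_add]
       congr 1 <;> simp [spineLabel])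
    | (refine ⟨Fin.castAdd 2 ⟨m - 2, by omega⟩, ?_⟩
       rw [sqDelta_castAdd_sub_two _ _ (by omega), ← Fin.append_add]
       congr 1 <;> simp [spineLabel]; done)
    | (refine ⟨Fin.castAdd 2 ⟨m - 1, by omega⟩, ?_⟩
       rw [sqDelta_castAdd_sub_one _ _ (by omega), ← Fin.append_add]
       congr 1 <;> first | decide | simpa)
    | (refine ⟨Fin.natAdd m 0, ?_⟩
       rw [sqDelta_natAdd, ← Fin.append_add]
       congr 1 <;> first | decide | simp)
    | (refine ⟨Fin.natAdd m 1, ?_⟩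
       rw [sqDelta_natAdd, ← Fin.append_add]
       congr 1 <;> first | decide | simp)

theorem gammaGraph_adj_spineEquiv_iff {m : ℕ} (hm : 4 ≤ m) (x y : Fin (m + 2) → ZMod 2) :
    (gammaGraph m hm).Adj (spineEquiv m x) (spineEquiv m y) ↔ (spinedCube (m + 2)).Adj x y := by
  refine ⟨spinedCube_adj_of_gammaGraph_adj hm, ?_⟩
  rintro ⟨-, ⟨i, rfl⟩ | ⟨i, rfl⟩⟩
  · exact gammaGraph_adj_spineEquiv_add_sqDelta hm x i
  · exact (gammaGraph_adj_spineEquiv_add_sqDelta hm y i).symm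

def spinedCubeIsoGammaGraph {m : ℕ} (hm : 4 ≤ m) : spinedCube (m + 2) ≃g gammaGraph m hm :=
  ⟨spineEquiv m, gammaGraph_adj_spineEquiv_iff hm _ _⟩

end SpinedCube

/-- For `n ≥ 6`, the explicit map `x₁⋯x_{n-2}00 ↦ (x,1)`, `x₁⋯x_{n-2}01 ↦ (x,2)`,
`x₁⋯x_{n-2}11 ↦ (x,3)`, `x₁⋯x_{n-2}10 ↦ (x,4)` (labels shifted to `0,1,2,3`) is a
graph isomorphism from `SQ_n` to the 4-Cayley graph `Γ_n`. -/
theorem spinedCube_iso_gammaGraph (n : ℕ) (hn : 6 ≤ n) :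
    ∃ e : spinedCube n ≃g gammaGraph (n - 2) (by omega),
      ∀ x : Fin n → ZMod 2,
        e x = (fun i : Fin (n - 2) => x (Fin.castLE (by omega) i),
          if x ⟨n - 2, by omega⟩ = 0 then
            (if x ⟨n - 1, by omega⟩ = 0 then (0 : Fin 4) else 1)
          else
            (if x ⟨n - 1, by omega⟩ = 0 then 3 else 2)) := by
  obtain ⟨m, rfl⟩ : ∃ m, n = m + 2 := ⟨n - 2, by omega⟩
  exact ⟨SpinedCube.spinedCubeIsoGammaGraph (by omega), fun x => rfl⟩
end

section
/- For n ≥ 6, the automorphism group of the spined cube SQ_n contains a subgroup isomorphic to (Z/2)^{n-2} that acts semiregularly on the vertex set with exactly 4 orbits (i.e., SQ_n is a 4-Cayley graph of (Z/2)^{n-2}). -/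
section Translation

variable {V U : Type*} [AddGroup V] [AddGroup U]

def translationSubgroup (K : AddSubgroup V) : Subgroup (Equiv.Perm V) :=
  (MulAction.toPermHom (Multiplicative K) V).range

variable {K : AddSubgroup V} {g : Equiv.Perm V}

lemma mem_translationSubgroup : g ∈ translationSubgroup K ↔ ∃ v ∈ K, g = Equiv.addLeft v := by
  constructor
  · rintro ⟨a, rfl⟩
    exact ⟨a.toAdd, a.toAdd.2, rfl⟩
  · rintro ⟨v, hv, rfl⟩
    exact ⟨Multiplicative.ofAdd ⟨v, hv⟩, rfl⟩

lemma toPermHom_multiplicative_injective :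
    Function.Injective (MulAction.toPermHom (Multiplicative K) V) := by
  intro a b hab
  have h : (a.toAdd : V) + 0 = b.toAdd + 0 := congrArg (· 0) hab
  exact Multiplicative.toAdd.injective (Subtype.ext (by simpa using h))

noncomputable def translationSubgroupEquiv (K : AddSubgroup V) :
    translationSubgroup K ≃* Multiplicative K :=
  (MonoidHom.ofInjective toPermHom_multiplicative_injective).symm

lemma eq_one_of_mem_translationSubgroup_of_apply_eq (hg : g ∈ translationSubgroup K) {x : V}
    (hx : g x = x) : g = 1 := by
  obtain ⟨v, -, rfl⟩ := mem_translationSubgroup.1 hg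
  rw [Equiv.coe_addLeft, add_eq_right] at hx
  ext y
  simp [hx]

lemma translationSubgroup_ker_orbit_eq_fiber (π : V →+ U) (x : V) :
    {y | ∃ g ∈ translationSubgroup π.ker, g x = y} = π ⁻¹' {π x} := by
  ext y
  simp only [mem_translationSubgroup, Set.mem_ofPred_eq, Set.mem_preimage, Set.mem_singleton_iff]
  constructor
  · rintro ⟨g, ⟨v, hv, rfl⟩, rfl⟩
    simp [AddMonoidHom.mem_ker.1 hv]
  · intro hy
    exact ⟨_, ⟨y + -x, by simp [hy], rfl⟩, by simp⟩

end Translation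

lemma Function.Surjective.ncard_fibers {α β : Type*} {f : α → β} (hf : f.Surjective) :
    {s | ∃ x, s = f ⁻¹' {f x}}.ncard = Nat.card β := by
  have hrange : {s | ∃ x, s = f ⁻¹' {f x}} = Set.range fun b => f ⁻¹' {b} := by
    ext s
    constructor
    · rintro ⟨x, rfl⟩
      exact ⟨f x, rfl⟩
    · rintro ⟨b, rfl⟩
      obtain ⟨x, rfl⟩ := hf b
      exact ⟨x, rfl⟩
  rw [hrange, Set.ncard_range_of_injective]
  exact (Set.preimage_injective.2 hf).comp fun _ _ h => Set.singleton_injective h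

lemma SimpleGraph.fromRel_adj_add_left_iff {V ι : Type*} [AddGroup V] (δ : V → ι → V) {v : V}
    (hv : ∀ x, δ (v + x) = δ x) (x y : V) :
    (fromRel fun x y => ∃ i, y = x + δ x i).Adj (v + x) (v + y) ↔
      (fromRel fun x y => ∃ i, y = x + δ x i).Adj x y := by
  simp [fromRel_adj, hv, add_assoc]

section SpinedCube

variable {n : ℕ} (hn : 2 ≤ n)

/-- `spine hn x = (x_{n-1}, x_n)` in the paper's 1-based notation. -/
def spine : (Fin n → ZMod 2) →ₗ[ZMod 2] (Fin 2 → ZMod 2) :=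
  LinearMap.funLeft _ _ fun i => ⟨n - 2 + i, by omega⟩

lemma spine_surjective : Function.Surjective (spine hn) :=
  LinearMap.funLeft_surjective_of_injective _ _ _ fun i j h => Fin.ext (by simpa using h)

lemma finrank_ker_spine : Module.finrank (ZMod 2) (LinearMap.ker (spine hn)) = n - 2 := by
  have := (spine hn).finrank_range_add_finrank_ker
  rw [LinearMap.range_eq_top.2 (spine_surjective hn)] at this
  simp only [finrank_top, Module.finrank_fintype_fun_eq_card, Fintype.card_fin] at this
  omega

lemma sqDelta_congr {x y : Fin n → ZMod 2} (h : spine hn x = spine hn y) :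
    sqDelta n x = sqDelta n y := by
  have h0 := congrFun h 0
  have h1 := congrFun h 1
  simp only [spine, LinearMap.funLeft_apply, Fin.val_zero, Fin.val_one, add_zero,
    show n - 2 + 1 = n - 1 by omega] at h0 h1
  unfold sqDelta
  simp only [h0, h1]

lemma spinedCube_adj_add_left_iff {v : Fin n → ZMod 2} (hv : v ∈ LinearMap.ker (spine hn))
    (x y : Fin n → ZMod 2) : (spinedCube n).Adj (v + x) (v + y) ↔ (spinedCube n).Adj x y :=
  SimpleGraph.fromRel_adj_add_left_iff _
    (fun x => sqDelta_congr hn (by simp [LinearMap.mem_ker.1 hv])) x y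

end SpinedCube

/-- For `n ≥ 6`, `SQ_n` is a 4-Cayley graph of `(ℤ/2)^{n-2}`: its automorphism
group contains a subgroup isomorphic to `(ℤ/2)^{n-2}` acting semiregularly on the
vertices with exactly 4 orbits. -/
theorem spinedCube_is_fourCayley (n : ℕ) (hn : 6 ≤ n) :
    ∃ G : Subgroup (Equiv.Perm (Fin n → ZMod 2)),
      Nonempty (G ≃* Multiplicative (Fin (n - 2) → ZMod 2)) ∧
      (∀ g ∈ G, ∀ x y, (spinedCube n).Adj x y ↔ (spinedCube n).Adj (g x) (g y)) ∧
      (∀ g ∈ G, ∀ x, g x = x → g = 1) ∧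
      ({s : Set (Fin n → ZMod 2) |
        ∃ x, s = {y | ∃ g ∈ G, g x = y}}).ncard = 4 := by
  have hn2 : 2 ≤ n := by omega
  let π := (spine hn2).toAddMonoidHom
  let kerEquiv : LinearMap.ker (spine hn2) ≃ₗ[ZMod 2] (Fin (n - 2) → ZMod 2) :=
    LinearEquiv.ofFinrankEq _ _ (by simp [finrank_ker_spine])
  refine ⟨translationSubgroup π.ker,
    ⟨(translationSubgroupEquiv _).trans (AddEquiv.toMultiplicative kerEquiv.toAddEquiv)⟩,
    fun g hg x y => ?_, fun g hg x => eq_one_of_mem_translationSubgroup_of_apply_eq hg, ?_⟩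
  · obtain ⟨v, hv, rfl⟩ := mem_translationSubgroup.1 hg
    exact (spinedCube_adj_add_left_iff hn2 hv x y).symm
  · simp_rw [translationSubgroup_ker_orbit_eq_fiber]
    have hπ : Function.Surjective π := spine_surjective hn2
    rw [hπ.ncard_fibers]
    simp
end

section
/- For every n ≥ 4, the n-dimensional spined cube SQ_n contains two edge-disjoint Hamiltonian cycles. -/
/-!
Induction on `n`, starting from an explicit pair of edge-disjoint Hamiltonian cycles of `SQ_4`.
Prepending a coordinate `b` embeds `SQ_m` into `SQ_(m+1)` as the half with first coordinate `b`,
and when the last two coordinates of `x` vanish, `0x` and `1x` are adjacent in `SQ_(m+1)` for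
`m ≥ 4`. A Hamiltonian cycle `u v ⋯ u` of `SQ_m` through such an edge `uv` therefore doubles to the
Hamiltonian cycle `0u 1u ⋯ 1v 0v ⋯ 0u` of `SQ_(m+1)`, which again starts with such an edge. Doubling
two edge-disjoint cycles whose starting edges have four distinct endpoints keeps them edge-disjoint.
-/

namespace SimpleGraph.Walk

variable {V W : Type*} {G : SimpleGraph V} {H : SimpleGraph W}

theorem isHamiltonianCycle_cons_iff [DecidableEq V] {u v : V} (h : G.Adj u v) (p : G.Walk v u) :
    (cons h p).IsHamiltonianCycle ↔ p.IsPath ∧ s(u, v) ∉ p.edges ∧ ∀ w, w ∈ p.support := by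
  rw [isHamiltonianCycle_iff_isCycle_and_support_count_tail_eq_one, cons_isCycle_iff,
    support_cons, List.tail_cons, and_assoc]
  exact and_congr_right fun hp => and_congr_right fun _ => hp.isHamiltonian_iff

section Prism

variable (f₀ f₁ : G →g H) {u v p q : V}

def prismPath (hv : H.Adj (f₁ v) (f₀ v)) (P : G.Walk v u) : H.Walk (f₁ u) (f₀ u) :=
  (P.reverse.map f₁).append (cons hv (P.map f₀))

variable {f₀ f₁}

theorem isHamiltonianCycle_cons_prismPath [DecidableEq V] [DecidableEq W]
    (hf₀ : Function.Injective f₀) (hf₁ : Function.Injective f₁)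
    (hf : ∀ x y, f₀ x ≠ f₁ y) (hcover : ∀ w, w ∈ Set.range f₀ ∨ w ∈ Set.range f₁)
    {huv : G.Adj u v} {P : G.Walk v u} (hC : (cons huv P).IsHamiltonianCycle)
    (hu : H.Adj (f₀ u) (f₁ u)) (hv : H.Adj (f₁ v) (f₀ v)) :
    (cons hu (prismPath f₀ f₁ hv P)).IsHamiltonianCycle := by
  obtain ⟨hP, -, hPall⟩ := (isHamiltonianCycle_cons_iff huv P).1 hC
  have hsupport : (prismPath f₀ f₁ hv P).support =
      P.support.reverse.map f₁ ++ P.support.map f₀ := by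
    simp [prismPath, support_append, support_map, support_reverse]
  have hedges : (prismPath f₀ f₁ hv P).edges =
      P.edges.reverse.map (Sym2.map f₁) ++ s(f₁ v, f₀ v) :: P.edges.map (Sym2.map f₀) := by
    simp [prismPath, edges_append, edges_map, edges_reverse, List.map_reverse]
  refine (isHamiltonianCycle_cons_iff hu _).2 ⟨?_, ?_, ?_⟩
  · rw [isPath_def, hsupport]
    refine ((List.nodup_reverse.2 hP.support_nodup).map hf₁).append
      (hP.support_nodup.map hf₀) ?_
    simp only [List.disjoint_iff_ne, List.mem_map]
    rintro _ ⟨x, -, rfl⟩ _ ⟨y, -, rfl⟩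
    exact (hf y x).symm
  · have hcross : s(f₀ u, f₁ u) ≠ s(f₁ v, f₀ v) := by
      rw [Ne, Sym2.eq_iff, not_or]
      exact ⟨fun h => hf u v h.1, fun h => huv.ne (hf₀ h.1)⟩
    rw [hedges]
    simp only [List.mem_append, List.mem_cons, List.mem_map, not_or, not_exists, not_and]
    refine ⟨fun e _ he => ?_, hcross, fun e _ he => ?_⟩
    · obtain ⟨y, -, hy⟩ := Sym2.mem_map.1 (he ▸ Sym2.mem_mk_left _ _)
      exact hf u y hy.symm
    · obtain ⟨y, -, hy⟩ := Sym2.mem_map.1 (he ▸ Sym2.mem_mk_right _ _)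
      exact hf y u hy
  · intro w
    rw [hsupport]
    rcases hcover w with ⟨x, rfl⟩ | ⟨x, rfl⟩ <;> simp [hPall]

theorem map_edges_cons_prismPath {g : W → V} (hg₀ : ∀ x, g (f₀ x) = x)
    (hg₁ : ∀ x, g (f₁ x) = x) (hu : H.Adj (f₀ u) (f₁ u)) (hv : H.Adj (f₁ v) (f₀ v))
    (P : G.Walk v u) :
    (cons hu (prismPath f₀ f₁ hv P)).edges.map (Sym2.map g) =
      s(u, u) :: (P.edges.reverse ++ s(v, v) :: P.edges) := by
  have hid₀ : Sym2.map g ∘ Sym2.map f₀ = id := by funext e; simp [Sym2.map_map, hg₀]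
  have hid₁ : Sym2.map g ∘ Sym2.map f₁ = id := by funext e; simp [Sym2.map_map, hg₁]
  simp [prismPath, edges_map, edges_append, edges_reverse, List.map_reverse, hg₀, hg₁, hid₀, hid₁]

theorem cons_prismPath_edges_disjoint {g : W → V} (hg₀ : ∀ x, g (f₀ x) = x)
    (hg₁ : ∀ x, g (f₁ x) = x) (hu : H.Adj (f₀ u) (f₁ u)) (hv : H.Adj (f₁ v) (f₀ v))
    (hp : H.Adj (f₀ p) (f₁ p)) (hq : H.Adj (f₁ q) (f₀ q)) {P : G.Walk v u} {Q : G.Walk q p}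
    (hPQ : ∀ e ∈ P.edges, e ∉ Q.edges) (hup : u ≠ p) (huq : u ≠ q) (hvp : v ≠ p) (hvq : v ≠ q) :
    ∀ e ∈ (cons hu (prismPath f₀ f₁ hv P)).edges, e ∉ (cons hp (prismPath f₀ f₁ hq Q)).edges := by
  intro e heP heQ
  -- `Sym2.map g` collapses the crossing edges to loops, and the other edges to edges of `P`, `Q`.
  have hP := map_edges_cons_prismPath hg₀ hg₁ hu hv P ▸ List.mem_map_of_mem (f := Sym2.map g) heP
  have hQ := map_edges_cons_prismPath hg₀ hg₁ hp hq Q ▸ List.mem_map_of_mem (f := Sym2.map g) heQ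
  have hloop : ∀ {a b x} {R : G.Walk a b}, s(x, x) ∉ R.edges := fun h =>
    (adj_of_mem_edges _ h).ne rfl
  simp only [List.mem_cons, List.mem_append, List.mem_reverse] at hP hQ
  grind

end Prism

end SimpleGraph.Walk

namespace SpinedCube

open SimpleGraph

instance (n : ℕ) : DecidableRel (spinedCube n).Adj := fun _ _ => by
  rw [spinedCube, fromRel_adj]; infer_instance

theorem adj_of_eq_add {n : ℕ} {x y : Fin n → ZMod 2} (hne : x ≠ y) (i : Fin n)
    (h : y = x + sqDelta n x i) : (spinedCube n).Adj x y := by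
  rw [spinedCube, fromRel_adj]
  exact ⟨hne, Or.inl ⟨i, h⟩⟩

theorem sqDelta_succ {m : ℕ} (hm : 2 ≤ m) (b : ZMod 2) (x : Fin m → ZMod 2) (i : Fin m) :
    sqDelta (m + 1) (Fin.cons b x) i.succ = Fin.cons 0 (sqDelta m x i) := by
  have h₂ : (⟨m + 1 - 2, by omega⟩ : Fin (m + 1)) = Fin.succ ⟨m - 2, by omega⟩ := by
    ext; simp; omega
  have h₁ : (⟨m + 1 - 1, by omega⟩ : Fin (m + 1)) = Fin.succ ⟨m - 1, by omega⟩ := by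
    ext; simp; omega
  funext j
  induction j using Fin.cases with
  | zero => simp [sqDelta, (Fin.succ_ne_zero i).symm]
  | succ j =>
    simp only [sqDelta, Fin.cons_succ, Fin.val_succ, h₁, h₂, Fin.succ_inj]
    congr 1
    split_ifs <;> first | rfl | omega

def consHom {m : ℕ} (hm : 2 ≤ m) (b : ZMod 2) : spinedCube m →g spinedCube (m + 1) where
  toFun x := Fin.cons b x
  map_rel' h := by
    have lift : ∀ {x y : Fin m → ZMod 2}, (∃ i, y = x + sqDelta m x i) →
        ∃ i, (Fin.cons b y : Fin (m + 1) → ZMod 2) =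
          Fin.cons b x + sqDelta (m + 1) (Fin.cons b x) i := by
      rintro x y ⟨i, rfl⟩
      refine ⟨i.succ, ?_⟩
      rw [sqDelta_succ hm]
      funext j
      induction j using Fin.cases <;> simp
    rw [spinedCube, fromRel_adj] at h ⊢
    exact ⟨(Fin.cons_right_injective (α := fun _ => ZMod 2) b).ne h.1, h.2.imp lift lift⟩

section ConsHom

variable {m : ℕ} (hm : 2 ≤ m)

theorem consHom_injective (b : ZMod 2) : Function.Injective (consHom hm b) :=
  Fin.cons_right_injective (α := fun _ => ZMod 2) b

theorem consHom_zero_ne_one (x y : Fin m → ZMod 2) : consHom hm 0 x ≠ consHom hm 1 y :=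
  fun h => zero_ne_one (congrFun h 0)

theorem mem_range_consHom (w : Fin (m + 1) → ZMod 2) :
    w ∈ Set.range (consHom hm 0) ∨ w ∈ Set.range (consHom hm 1) := by
  have hw : consHom hm (w 0) (Fin.tail w) = w := Fin.cons_self_tail w
  rcases (by decide : ∀ c : ZMod 2, c = 0 ∨ c = 1) (w 0) with h | h <;> rw [h] at hw
  exacts [Or.inl ⟨_, hw⟩, Or.inr ⟨_, hw⟩]

theorem tail_consHom (b : ZMod 2) (x : Fin m → ZMod 2) : Fin.tail (consHom hm b x) = x :=
  Fin.tail_cons _ _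

end ConsHom

/-- The paper's `x_(n-1) = x_n = 0`; coordinates are indexed from `0` here. -/
def LastTwoZero {n : ℕ} (x : Fin n → ZMod 2) : Prop :=
  ∀ i : Fin n, n ≤ i.val + 2 → x i = 0

instance {n : ℕ} : DecidablePred (LastTwoZero (n := n)) := fun _ => by
  unfold LastTwoZero; infer_instance

theorem LastTwoZero.cons {m : ℕ} (hm : 2 ≤ m) (b : ZMod 2) {x : Fin m → ZMod 2}
    (hx : LastTwoZero x) : LastTwoZero (Fin.cons b x : Fin (m + 1) → ZMod 2) := by
  intro i hi
  induction i using Fin.cases with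
  | zero => simp at hi; omega
  | succ i => simpa using hx i (by simp at hi; omega)

theorem sqDelta_zero {n : ℕ} (hn : 5 ≤ n) {x : Fin n → ZMod 2} (hx : LastTwoZero x) :
    sqDelta n x ⟨0, by omega⟩ = Pi.single ⟨0, by omega⟩ 1 := by
  funext j
  simp [sqDelta, Pi.single_apply, hx ⟨n - 2, by omega⟩ (by simp; omega),
    hx ⟨n - 1, by omega⟩ (by simp; omega), hn]

theorem adj_cons_zero_cons_one {m : ℕ} (hm : 4 ≤ m) {x : Fin m → ZMod 2} (hx : LastTwoZero x) :
    (spinedCube (m + 1)).Adj (Fin.cons 0 x) (Fin.cons 1 x) := by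
  refine adj_of_eq_add (fun h => zero_ne_one (congrFun h 0)) ⟨0, by omega⟩ ?_
  rw [sqDelta_zero (by omega) (hx.cons (by omega) 0)]
  funext j
  induction j using Fin.cases <;> simp

/-- The invariant of the induction on `n`. -/
structure CyclePair (n : ℕ) where
  u : Fin n → ZMod 2
  v : Fin n → ZMod 2
  p : Fin n → ZMod 2
  q : Fin n → ZMod 2
  huv : (spinedCube n).Adj u v
  hpq : (spinedCube n).Adj p q
  P : (spinedCube n).Walk v u
  Q : (spinedCube n).Walk q p
  isHamiltonianCycle_uv : (Walk.cons huv P).IsHamiltonianCycle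
  isHamiltonianCycle_pq : (Walk.cons hpq Q).IsHamiltonianCycle
  edges_disjoint : ∀ e ∈ (Walk.cons huv P).edges, e ∉ (Walk.cons hpq Q).edges
  lastTwoZero_u : LastTwoZero u
  lastTwoZero_v : LastTwoZero v
  lastTwoZero_p : LastTwoZero p
  lastTwoZero_q : LastTwoZero q
  u_ne_p : u ≠ p
  u_ne_q : u ≠ q
  v_ne_p : v ≠ p
  v_ne_q : v ≠ q

def CyclePair.succ {m : ℕ} (hm : 4 ≤ m) (c : CyclePair m) : CyclePair (m + 1) :=
  have hm₂ : 2 ≤ m := by omega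
  have cross : ∀ {x}, LastTwoZero x →
      (spinedCube (m + 1)).Adj (consHom hm₂ 0 x) (consHom hm₂ 1 x) :=
    adj_cons_zero_cons_one hm
  have hPQ : ∀ e ∈ c.P.edges, e ∉ c.Q.edges := fun e heP heQ =>
    c.edges_disjoint e (List.mem_cons_of_mem _ heP) (List.mem_cons_of_mem _ heQ)
  { u := Fin.cons 0 c.u
    v := Fin.cons 1 c.u
    p := Fin.cons 0 c.p
    q := Fin.cons 1 c.p
    huv := cross c.lastTwoZero_u
    hpq := cross c.lastTwoZero_p
    P := Walk.prismPath _ _ (cross c.lastTwoZero_v).symm c.P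
    Q := Walk.prismPath _ _ (cross c.lastTwoZero_q).symm c.Q
    isHamiltonianCycle_uv := Walk.isHamiltonianCycle_cons_prismPath (consHom_injective hm₂ 0)
      (consHom_injective hm₂ 1) (consHom_zero_ne_one hm₂) (mem_range_consHom hm₂)
      c.isHamiltonianCycle_uv _ _
    isHamiltonianCycle_pq := Walk.isHamiltonianCycle_cons_prismPath (consHom_injective hm₂ 0)
      (consHom_injective hm₂ 1) (consHom_zero_ne_one hm₂) (mem_range_consHom hm₂)
      c.isHamiltonianCycle_pq _ _
    edges_disjoint := Walk.cons_prismPath_edges_disjoint (tail_consHom hm₂ 0) (tail_consHom hm₂ 1)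
      _ _ _ _ hPQ c.u_ne_p c.u_ne_q c.v_ne_p c.v_ne_q
    lastTwoZero_u := c.lastTwoZero_u.cons hm₂ 0
    lastTwoZero_v := c.lastTwoZero_u.cons hm₂ 1
    lastTwoZero_p := c.lastTwoZero_p.cons hm₂ 0
    lastTwoZero_q := c.lastTwoZero_p.cons hm₂ 1
    u_ne_p := (consHom_injective hm₂ 0).ne c.u_ne_p
    u_ne_q := consHom_zero_ne_one hm₂ _ _
    v_ne_p := (consHom_zero_ne_one hm₂ _ _).symm
    v_ne_q := (consHom_injective hm₂ 1).ne c.u_ne_p }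

set_option maxRecDepth 4000 in
def cyclePairFour : CyclePair 4 where
  u := ![0, 0, 0, 0]
  v := ![1, 0, 0, 0]
  p := ![0, 1, 0, 0]
  q := ![1, 1, 0, 0]
  huv := by decide
  hpq := by decide
  P := Walk.ofSupport
    [![1, 0, 0, 0], ![1, 0, 1, 0], ![0, 0, 1, 0], ![0, 1, 1, 0], ![0, 1, 1, 1], ![1, 0, 1, 1],
     ![1, 0, 0, 1], ![1, 1, 1, 1], ![1, 1, 1, 0], ![1, 1, 0, 0], ![1, 1, 0, 1], ![0, 0, 0, 1],
     ![0, 0, 1, 1], ![0, 1, 0, 1], ![0, 1, 0, 0], ![0, 0, 0, 0]] (List.cons_ne_nil _ _) (by decide)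
  Q := Walk.ofSupport
    [![1, 1, 0, 0], ![1, 0, 0, 0], ![1, 0, 0, 1], ![0, 1, 0, 1], ![0, 1, 1, 1], ![0, 0, 0, 1],
     ![0, 0, 0, 0], ![0, 0, 1, 0], ![0, 0, 1, 1], ![1, 1, 1, 1], ![1, 1, 0, 1], ![1, 0, 1, 1],
     ![1, 0, 1, 0], ![1, 1, 1, 0], ![0, 1, 1, 0], ![0, 1, 0, 0]] (List.cons_ne_nil _ _) (by decide)
  isHamiltonianCycle_uv :=
    (Walk.isHamiltonianCycle_cons_iff _ _).2
      ⟨(Walk.isPath_def _).2 (by decide), by decide, by decide⟩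
  isHamiltonianCycle_pq :=
    (Walk.isHamiltonianCycle_cons_iff _ _).2
      ⟨(Walk.isPath_def _).2 (by decide), by decide, by decide⟩
  edges_disjoint := by decide
  lastTwoZero_u := by decide
  lastTwoZero_v := by decide
  lastTwoZero_p := by decide
  lastTwoZero_q := by decide
  u_ne_p := by decide
  u_ne_q := by decide
  v_ne_p := by decide
  v_ne_q := by decide

theorem nonempty_cyclePair {n : ℕ} (hn : 4 ≤ n) : Nonempty (CyclePair n) := by
  induction n, hn using Nat.le_induction with
  | base => exact ⟨cyclePairFour⟩
  | succ m hm ih => exact ⟨ih.some.succ hm⟩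

end SpinedCube

/-- For every `n ≥ 4`, the spined cube `SQ_n` contains two edge-disjoint
Hamiltonian cycles. -/
theorem spinedCube_two_edge_disjoint_hamiltonian_cycles (n : ℕ) (hn : 4 ≤ n) :
    ∃ (v w : Fin n → ZMod 2) (c₁ : (spinedCube n).Walk v v)
      (c₂ : (spinedCube n).Walk w w),
      c₁.IsHamiltonianCycle ∧ c₂.IsHamiltonianCycle ∧
      ∀ e, e ∈ c₁.edges → e ∉ c₂.edges := by
  obtain ⟨c⟩ := SpinedCube.nonempty_cyclePair hn
  exact ⟨_, _, _, _, c.isHamiltonianCycle_uv, c.isHamiltonianCycle_pq, c.edges_disjoint⟩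
end
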